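/- arXiv:1709.00826 — 3 statements merged into one kernel-verified Lean document; each statement's English description precedes it below -/
import Mathlib

section
/- The encoding of CCS with signals into a process algebra without an emission predicate, obtained by replacing the predicate P ↷ s with a self-loop transition P →s̄ P (i.e., changing the rule (P^s) ↷ s into P^s →s̄ P^s and treating all other emission rules as ordinary transition rules), preserves and reflects strong bisimilarity: two CCSS processes are bisimilar in the original semantics (matching transitions and emitted signals) iff they are bisimilar in the encoded semantics (matching transitions only). -/
namespace CCSS

/-- Actions of CCS with signals: handshake names, conames, signal reads, and τ. -/
inductive Act (Name Sig : Type) : Type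
  | name : Name → Act Name Sig
  | coname : Name → Act Name Sig
  | sig : Sig → Act Name Sig
  | tau : Act Name Sig

namespace Act
variable {Name Sig : Type}

/-- Relabelling applied to an action. -/
def comap (f : Name → Name) (g : Sig → Sig) : Act Name Sig → Act Name Sig
  | name a => name (f a)
  | coname a => coname (f a)
  | sig s => sig (g s)
  | tau => tau

/-- Whether an action is permitted under a restriction set `L` of names and signals. -/
def allowed (L : Set (Name ⊕ Sig)) : Act Name Sig → Prop
  | name a => Sum.inl a ∉ L
  | coname a => Sum.inl a ∉ L
  | sig s => Sum.inr s ∉ L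
  | tau => True

end Act

/-- Process expressions of CCS with signals. -/
inductive Proc (Name Sig Ident : Type) : Type 1
  | ident : Ident → Proc Name Sig Ident
  | pre : Act Name Sig → Proc Name Sig Ident → Proc Name Sig Ident
  | choice : (I : Type) → (I → Proc Name Sig Ident) → Proc Name Sig Ident
  | par : Proc Name Sig Ident → Proc Name Sig Ident → Proc Name Sig Ident
  | res : Proc Name Sig Ident → Set (Name ⊕ Sig) → Proc Name Sig Ident
  | rel : Proc Name Sig Ident → (Name → Name) → (Sig → Sig) → Proc Name Sig Ident
  | sigop : Proc Name Sig Ident → Sig → Proc Name Sig Ident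

variable {Name Sig Ident : Type}

/-- The inactive process 0. -/
def Proc.nil : Proc Name Sig Ident := .choice Empty (fun e => e.elim)

/-- Binary choice P + Q. -/
def Proc.cplus (P Q : Proc Name Sig Ident) : Proc Name Sig Ident :=
  .choice Bool (fun b => if b then P else Q)

/-- The signal-emission predicate P ↷ s. -/
inductive Emits (env : Ident → Proc Name Sig Ident) : Proc Name Sig Ident → Sig → Prop
  | sigop {P : Proc Name Sig Ident} {s : Sig} : Emits env (.sigop P s) s
  | sigop_lift {P : Proc Name Sig Ident} {s t : Sig} :
      Emits env P s → Emits env (.sigop P t) s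
  | choice {I : Type} {f : I → Proc Name Sig Ident} {j : I} {s : Sig} :
      Emits env (f j) s → Emits env (.choice I f) s
  | parL {P Q : Proc Name Sig Ident} {s : Sig} : Emits env P s → Emits env (.par P Q) s
  | parR {P Q : Proc Name Sig Ident} {s : Sig} : Emits env Q s → Emits env (.par P Q) s
  | res {P : Proc Name Sig Ident} {L : Set (Name ⊕ Sig)} {s : Sig} :
      Emits env P s → Sum.inr s ∉ L → Emits env (.res P L) s
  | rel {P : Proc Name Sig Ident} {f : Name → Name} {g : Sig → Sig} {s : Sig} :
      Emits env P s → Emits env (.rel P f g) (g s)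
  | ident {A : Ident} {s : Sig} : Emits env (env A) s → Emits env (.ident A) s

/-- The labelled transition relation of CCS with signals. -/
inductive Trans (env : Ident → Proc Name Sig Ident) :
    Proc Name Sig Ident → Act Name Sig → Proc Name Sig Ident → Prop
  | pre {α : Act Name Sig} {P : Proc Name Sig Ident} : Trans env (.pre α P) α P
  | choice {I : Type} {f : I → Proc Name Sig Ident} {j : I} {α P'} :
      Trans env (f j) α P' → Trans env (.choice I f) α P'
  | parL {P Q α P'} : Trans env P α P' → Trans env (.par P Q) α (.par P' Q)
  | parR {P Q α Q'} : Trans env Q α Q' → Trans env (.par P Q) α (.par P Q')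
  | sync1 {P Q a P' Q'} : Trans env P (.name a) P' → Trans env Q (.coname a) Q' →
      Trans env (.par P Q) .tau (.par P' Q')
  | sync2 {P Q a P' Q'} : Trans env P (.coname a) P' → Trans env Q (.name a) Q' →
      Trans env (.par P Q) .tau (.par P' Q')
  | sigL {P Q s Q'} : Emits env P s → Trans env Q (.sig s) Q' →
      Trans env (.par P Q) .tau (.par P Q')
  | sigR {P Q s P'} : Trans env P (.sig s) P' → Emits env Q s →
      Trans env (.par P Q) .tau (.par P' Q)
  | res {P α P' L} : Trans env P α P' → Act.allowed L α → Trans env (.res P L) α (.res P' L)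
  | rel {P α P' f g} : Trans env P α P' →
      Trans env (.rel P f g) (Act.comap f g α) (.rel P' f g)
  | ident {A α P'} : Trans env (env A) α P' → Trans env (.ident A) α P'

/-- A strong bisimulation for CCSS: matches transitions and emitted signals. -/
def IsBisimulation (env : Ident → Proc Name Sig Ident)
    (R : Proc Name Sig Ident → Proc Name Sig Ident → Prop) : Prop :=
  ∀ P Q, R P Q →
    (∀ α P', Trans env P α P' → ∃ Q', Trans env Q α Q' ∧ R P' Q') ∧
    (∀ α Q', Trans env Q α Q' → ∃ P', Trans env P α P' ∧ R P' Q') ∧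
    (∀ s, Emits env P s ↔ Emits env Q s)

/-- Strong bisimilarity on CCSS processes. -/
def Bisim (env : Ident → Proc Name Sig Ident) (P Q : Proc Name Sig Ident) : Prop :=
  ∃ R, IsBisimulation env R ∧ R P Q

end CCSS

namespace CCSS

variable {Name Sig Ident : Type}

/-- Labels of the encoded calculus: ordinary actions plus the co-signals s̄. -/
abbrev ELabel (Name Sig : Type) := Act Name Sig ⊕ Sig

/-- The encoded transition relation: ordinary transitions, plus a self-loop
`P →s̄ P` whenever `P ↷ s` (the rule (P^s) ↷ s becomes P^s →s̄ P^s, and the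
emission-propagation rules become instances of the ordinary transition rules). -/
def ETrans (env : Ident → Proc Name Sig Ident) :
    Proc Name Sig Ident → ELabel Name Sig → Proc Name Sig Ident → Prop :=
  fun P l P' =>
    (∃ α : Act Name Sig, l = Sum.inl α ∧ Trans env P α P') ∨
    (∃ s : Sig, l = Sum.inr s ∧ Emits env P s ∧ P' = P)

/-- Bisimulations of the encoded calculus match transitions only. -/
def IsEBisimulation (env : Ident → Proc Name Sig Ident)
    (R : Proc Name Sig Ident → Proc Name Sig Ident → Prop) : Prop :=
  ∀ P Q, R P Q →
    (∀ l P', ETrans env P l P' → ∃ Q', ETrans env Q l Q' ∧ R P' Q') ∧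
    (∀ l Q', ETrans env Q l Q' → ∃ P', ETrans env P l P' ∧ R P' Q')

def EBisim (env : Ident → Proc Name Sig Ident) (P Q : Proc Name Sig Ident) : Prop :=
  ∃ R, IsEBisimulation env R ∧ R P Q

namespace ETrans

variable {env : Ident → Proc Name Sig Ident} {P P' : Proc Name Sig Ident}

@[simp]
theorem inl_iff {α : Act Name Sig} : ETrans env P (.inl α) P' ↔ Trans env P α P' := by
  simp [ETrans]

@[simp]
theorem inr_iff {s : Sig} : ETrans env P (.inr s) P' ↔ Emits env P s ∧ P' = P := by
  simp [ETrans]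

end ETrans

/-- An emission is matched by the self-loop it induces, which keeps the pair in `R`. -/
theorem eSimulation_iff {env : Ident → Proc Name Sig Ident}
    {R : Proc Name Sig Ident → Proc Name Sig Ident → Prop} {P Q : Proc Name Sig Ident}
    (hPQ : R P Q) :
    (∀ l P', ETrans env P l P' → ∃ Q', ETrans env Q l Q' ∧ R P' Q') ↔
      (∀ α P', Trans env P α P' → ∃ Q', Trans env Q α Q' ∧ R P' Q') ∧
        ∀ s, Emits env P s → Emits env Q s := by
  simp only [Sum.forall, ETrans.inl_iff, ETrans.inr_iff]
  refine and_congr_right' <| forall_congr' fun s => ⟨fun h hP => ?_, fun h P' ⟨hP, hP'⟩ => ?_⟩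
  · obtain ⟨_, ⟨hQ, _⟩, _⟩ := h P ⟨hP, rfl⟩
    exact hQ
  · exact ⟨Q, ⟨h hP, rfl⟩, hP' ▸ hPQ⟩

theorem isEBisimulation_iff {env : Ident → Proc Name Sig Ident}
    {R : Proc Name Sig Ident → Proc Name Sig Ident → Prop} :
    IsEBisimulation env R ↔ IsBisimulation env R := by
  refine forall₂_congr fun P Q => forall_congr' fun hPQ => ?_
  rw [eSimulation_iff hPQ, eSimulation_iff (R := fun Q P => R P Q) hPQ]
  simp only [iff_def, forall_and]
  tauto

/-- the encoding of emission predicates as self-loop transitions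
preserves and reflects strong bisimilarity. -/
theorem encoding_preserves_reflects_bisim
    (env : Ident → Proc Name Sig Ident) (P Q : Proc Name Sig Ident) :
    Bisim env P Q ↔ EBisim env P Q :=
  exists_congr fun _ => and_congr_left' isEBisimulation_iff.symm

end CCSS
end

section
/- In the CCS rendering of Peterson's algorithm (with reads as handshakes), there exists an ∅-just (hence just) infinite path on which Process A performs noncritA but never performs critA: the path where A halts just before writing readyA, while B cycles through its instructions forever, always reading readyA = false. Hence the CCS rendering fails the liveness property under the justness assumption. -/
namespace CCSS

variable {Name Sig Ident : Type}

/-- A (finite or infinite) path: `len` transitions, with `state n` and `act n`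
the n-th state and action. For a finite path of length `k`, only positions
`n ≤ k` (states) and `n < k` (actions) are relevant. -/
structure Path (env : Ident → Proc Name Sig Ident) : Type 1 where
  len : ℕ∞
  state : ℕ → Proc Name Sig Ident
  act : ℕ → Act Name Sig
  valid : ∀ n : ℕ, (n : ℕ∞) < len → Trans env (state n) (act n) (state (n + 1))

/-- The suffix of a path obtained by removing the first `k` transitions. -/
def Path.drop {env : Ident → Proc Name Sig Ident} (π : Path env) (k : ℕ) : Path env where
  len := π.len - k
  state n := π.state (n + k)
  act n := π.act (n + k)
  valid n h := by
    have h' : ((n + k : ℕ) : ℕ∞) < π.len := by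
      have := lt_tsub_iff_right.mp h
      exact_mod_cast this
    have := π.valid (n + k) h'
    simpa [Nat.add_right_comm] using this

/-- `IsParDecomp env π πP πQ` : the path `π` of a parallel composition decomposes
into the path `πP` of the left component and `πQ` of the right component.
`g n` (resp. `h n`) counts the transitions of the left (resp. right) component
among the first `n` transitions of `π`; in a signal communication the
decomposition along the emitting component is empty. -/
def IsParDecomp (env : Ident → Proc Name Sig Ident) (π πP πQ : Path env) : Prop :=
  ∃ g h : ℕ → ℕ, g 0 = 0 ∧ h 0 = 0 ∧
    (∀ n : ℕ, (n : ℕ∞) ≤ π.len →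
      π.state n = .par (πP.state (g n)) (πQ.state (h n))) ∧
    (∀ n : ℕ, (n : ℕ∞) < π.len →
      (g (n+1) = g n + 1 ∧ h (n+1) = h n ∧ πP.act (g n) = π.act n) ∨
      (g (n+1) = g n ∧ h (n+1) = h n + 1 ∧ πQ.act (h n) = π.act n) ∨
      (g (n+1) = g n + 1 ∧ h (n+1) = h n + 1 ∧ π.act n = .tau ∧
        ∃ a : Name, (πP.act (g n) = .name a ∧ πQ.act (h n) = .coname a) ∨
                    (πP.act (g n) = .coname a ∧ πQ.act (h n) = .name a)) ∨
      (g (n+1) = g n ∧ h (n+1) = h n + 1 ∧ π.act n = .tau ∧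
        ∃ s : Sig, Emits env (πP.state (g n)) s ∧ πQ.act (h n) = .sig s) ∨
      (g (n+1) = g n + 1 ∧ h (n+1) = h n ∧ π.act n = .tau ∧
        ∃ s : Sig, Emits env (πQ.state (h n)) s ∧ πP.act (g n) = .sig s)) ∧
    πP.len = (⨆ n : {n : ℕ // (n : ℕ∞) ≤ π.len}, ((g n.1 : ℕ) : ℕ∞)) ∧
    πQ.len = (⨆ n : {n : ℕ // (n : ℕ∞) ≤ π.len}, ((h n.1 : ℕ) : ℕ∞))

/-- Decomposition of a path of `P\L` into a path of `P`. -/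
def IsResDecomp (env : Ident → Proc Name Sig Ident) (π π' : Path env)
    (L : Set (Name ⊕ Sig)) : Prop :=
  π'.len = π.len ∧
  (∀ n : ℕ, (n : ℕ∞) ≤ π.len → π.state n = .res (π'.state n) L) ∧
  (∀ n : ℕ, (n : ℕ∞) < π.len → π'.act n = π.act n)

/-- Decomposition of a path of `P[f]` into a path of `P`. -/
def IsRelDecomp (env : Ident → Proc Name Sig Ident) (π π' : Path env)
    (f : Name → Name) (g : Sig → Sig) : Prop :=
  π'.len = π.len ∧
  (∀ n : ℕ, (n : ℕ∞) ≤ π.len → π.state n = .rel (π'.state n) f g) ∧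
  (∀ n : ℕ, (n : ℕ∞) < π.len → π.act n = Act.comap f g (π'.act n))

/-- The set of actions L ∪ L̄_H induced by a restriction set L. -/
def actsOf (L : Set (Name ⊕ Sig)) : Set (Act Name Sig) :=
  {α | ∃ a, Sum.inl a ∈ L ∧ (α = .name a ∨ α = .coname a)} ∪
  {α | ∃ s, Sum.inr s ∈ L ∧ α = .sig s}

/-- The defining clauses of the family of Y-signalling paths, as a closure
property of a family `C`; `Y`-signalling is the greatest such family. -/
def SignallingClosed (env : Ident → Proc Name Sig Ident)
    (C : Path env → Set Sig → Prop) : Prop :=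
  ∀ π Y, C π Y →
    (∀ k : ℕ, π.len = (k : ℕ∞) → ∀ s, Emits env (π.state k) s → s ∈ Y) ∧
    (∀ P Q, π.state 0 = .par P Q →
      ∃ πP πQ X Z, IsParDecomp env π πP πQ ∧ C πP X ∧ C πQ Z ∧ X ∪ Z ⊆ Y) ∧
    (∀ P L, π.state 0 = .res P L →
      ∃ π', IsResDecomp env π π' L ∧ C π' (Y ∪ {s | Sum.inr s ∈ L})) ∧
    (∀ P f g, π.state 0 = .rel P f g →
      ∃ π', IsRelDecomp env π π' f g ∧ C π' (g ⁻¹' Y)) ∧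
    (∀ k : ℕ, C (π.drop k) Y)

/-- `π` is a `Y`-signalling path (coinductively: member of the largest class
closed under the defining clauses). -/
def Signalling (env : Ident → Proc Name Sig Ident) (π : Path env) (Y : Set Sig) : Prop :=
  ∃ C, SignallingClosed env C ∧ C π Y

/-- The defining clauses of the family of Y-just paths, as a closure property
of a family `C`; `Y`-justness is the greatest such family. -/
def JustClosed (env : Ident → Proc Name Sig Ident)
    (C : Path env → Set (Act Name Sig) → Prop) : Prop :=
  ∀ π Y, C π Y →
    (∀ k : ℕ, π.len = (k : ℕ∞) → ∀ α P', Trans env (π.state k) α P' → α ∈ Y) ∧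
    (∀ P Q, π.state 0 = .par P Q →
      ∃ πP πQ X Z X' Z', IsParDecomp env π πP πQ ∧
        C πP X ∧ C πQ Z ∧ Signalling env πP X' ∧ Signalling env πQ Z' ∧
        X ∪ Z ⊆ Y ∧
        (∀ a : Name, Act.name a ∈ X → Act.coname a ∉ Z) ∧
        (∀ a : Name, Act.coname a ∈ X → Act.name a ∉ Z) ∧
        (∀ s ∈ Z', Act.sig s ∉ X) ∧
        (∀ s ∈ X', Act.sig s ∉ Z)) ∧
    (∀ P L, π.state 0 = .res P L →
      ∃ π', IsResDecomp env π π' L ∧ C π' (Y ∪ actsOf L)) ∧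
    (∀ P f g, π.state 0 = .rel P f g →
      ∃ π', IsRelDecomp env π π' f g ∧ C π' (Act.comap f g ⁻¹' Y)) ∧
    (∀ k : ℕ, C (π.drop k) Y)

/-- `π` is a `Y`-just path. -/
def Just (env : Ident → Proc Name Sig Ident) (π : Path env)
    (Y : Set (Act Name Sig)) : Prop :=
  ∃ C, JustClosed env C ∧ C π Y

/-- `π` is just: `Y`-just for some set `Y` of blocking actions (τ is non-blocking). -/
def IsJust (env : Ident → Proc Name Sig Ident) (π : Path env) : Prop :=
  ∃ Y : Set (Act Name Sig), Act.tau ∉ Y ∧ Just env π Y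

end CCSS

namespace CCSS
namespace PetersonCCS

/-- Pure CCS: value notifications are handshake names; no signals. -/
inductive PN
  | assRA (b : Bool) | assRB (b : Bool) | assT (b : Bool)
  | notRA (b : Bool) | notRB (b : Bool) | notT (b : Bool)
  | noncritA | critA | noncritB | critB

inductive PI | A | B | RA (b : Bool) | RB (b : Bool) | T (b : Bool)

abbrev PP := Proc PN Empty PI

def KA : PP := .pre (.name .critA) (.pre (.coname (.assRA false)) (.ident .A))
def KB : PP := .pre (.name .critB) (.pre (.coname (.assRB false)) (.ident .B))

/-- The CCS rendering: reads are handshakes, e.g. readyA_false =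
ass(readyA,true).readyA_true + ass(readyA,false).readyA_false +
n̅ot(readyA,false).readyA_false. -/
def env : PI → PP
  | .A => .pre (.name .noncritA) (.pre (.coname (.assRA true)) (.pre (.coname (.assT false))
      (Proc.cplus (.pre (.name (.notRB false)) KA) (.pre (.name (.notT true)) KA))))
  | .B => .pre (.name .noncritB) (.pre (.coname (.assRB true)) (.pre (.coname (.assT true))
      (Proc.cplus (.pre (.name (.notRA false)) KB) (.pre (.name (.notT false)) KB))))
  | .RA b => Proc.cplus (.pre (.name (.assRA true)) (.ident (.RA true)))
              (Proc.cplus (.pre (.name (.assRA false)) (.ident (.RA false)))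
                          (.pre (.coname (.notRA b)) (.ident (.RA b))))
  | .RB b => Proc.cplus (.pre (.name (.assRB true)) (.ident (.RB true)))
              (Proc.cplus (.pre (.name (.assRB false)) (.ident (.RB false)))
                          (.pre (.coname (.notRB b)) (.ident (.RB b))))
  | .T b => Proc.cplus (.pre (.name (.assT true)) (.ident (.T true)))
              (Proc.cplus (.pre (.name (.assT false)) (.ident (.T false)))
                          (.pre (.coname (.notT b)) (.ident (.T b))))

/-- L: all names except noncritA, critA, noncritB, critB. -/
def L : Set (PN ⊕ Empty) :=
  {x | x ≠ .inl .noncritA ∧ x ≠ .inl .critA ∧ x ≠ .inl .noncritB ∧ x ≠ .inl .critB}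

def Sys : PP :=
  .res (.par (.par (.par (.par (.ident .A) (.ident .B)) (.ident (.RA false)))
    (.ident (.RB false))) (.ident (.T true))) L

end PetersonCCS

/-!
A performs `noncritA` and halts in front of `a̅ss(readyA,true)`, while B runs through its six
instructions forever, handshaking with readyB, turn and readyA (always reading `readyA = false`).
Justness is the greatest family of paths closed under its clauses, so it is witnessed by any
closed family: here the suffixes of this path and of its components along `\L` and `|`, each with
a blocking set. All component paths are infinite except A's, whose last state only offers
`a̅ss(readyA,true)`; this action lies in `L̄`, so A's component may be `{a̅ss(readyA,true)}`-just
while the whole path is `∅`-just, and `critA` never occurs.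
-/

theorem _root_.ENat.iSup_sub {ι : Sort*} (f : ι → ℕ∞) (a : ℕ∞) :
    (⨆ i, f i) - a = ⨆ i, (f i - a) :=
  le_antisymm (tsub_le_iff_right.mpr <| iSup_le fun i =>
      tsub_le_iff_right.mp <| le_iSup (fun i => f i - a) i)
    (iSup_le fun i => tsub_le_tsub_right (le_iSup f i) a)

theorem _root_.ENat.iSup_natCast_eq_top_of_forall_lt {f : ℕ → ℕ} (h : ∀ m, ∃ n, m < f n) :
    ⨆ n, (f n : ℕ∞) = ⊤ :=
  ENat.iSup_natCast_eq_top.mpr <| not_bddAbove_iff.mpr fun m =>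
    (h m).elim fun n hn => ⟨f n, ⟨n, rfl⟩, hn⟩

theorem _root_.Monotone.iSup_natCast_sub {g : ℕ → ℕ} (hg : Monotone g) (k : ℕ) :
    (⨆ n, (g n : ℕ∞)) - g k = ⨆ n, ((g (n + k) - g k : ℕ) : ℕ∞) := by
  have hshift := ((Nat.mono_cast (α := ℕ∞)).comp hg).iSup_nat_add k
  simp only [Function.comp] at hshift
  rw [← hshift, ENat.iSup_sub]
  simp

theorem _root_.iSup_subtype_natCast_le_of_eq_top {l : ℕ∞} (hl : l = ⊤) (f : ℕ → ℕ∞) :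
    ⨆ n : {n : ℕ // (n : ℕ∞) ≤ l}, f n.1 = ⨆ n, f n := by
  subst hl
  simp [iSup_subtype]

section

variable {Name Sig Ident : Type} {env : Ident → Proc Name Sig Ident}

namespace Path

@[ext]
theorem ext {π π' : Path env} (hlen : π.len = π'.len) (hstate : π.state = π'.state)
    (hact : π.act = π'.act) : π = π' := by
  cases π; cases π'; subst hlen hstate hact; rfl

@[simp]
theorem drop_zero (π : Path env) : π.drop 0 = π := by
  ext <;> simp [drop]

theorem drop_drop (π : Path env) (j k : ℕ) : (π.drop j).drop k = π.drop (j + k) := by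
  ext n
  · simp [drop, tsub_tsub]
  · exact congrArg π.state (by omega)
  · exact congrArg π.act (by omega)

theorem len_le_of_drop_len_eq {π : Path env} {k m : ℕ} (h : (π.drop k).len = m) :
    π.len ≤ (m + k : ℕ) := by
  push_cast
  exact tsub_le_iff_right.mp h.le

variable (env) in
def ofSteps (s : ℕ → Proc Name Sig Ident) (a : ℕ → Act Name Sig)
    (h : ∀ n, Trans env (s n) (a n) (s (n + 1))) : Path env :=
  ⟨⊤, s, a, fun n _ => h n⟩

def restrict (π : Path env) (L : Set (Name ⊕ Sig))
    (h : ∀ n : ℕ, (n : ℕ∞) < π.len → (π.act n).allowed L) : Path env where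
  len := π.len
  state n := .res (π.state n) L
  act := π.act
  valid n hn := .res (π.valid n hn) (h n hn)

theorem isResDecomp_restrict (π : Path env) (L : Set (Name ⊕ Sig))
    (h : ∀ n : ℕ, (n : ℕ∞) < π.len → (π.act n).allowed L) :
    IsResDecomp env (π.restrict L h) π L :=
  ⟨rfl, fun _ _ => rfl, fun _ _ => rfl⟩

end Path

theorem IsResDecomp.drop {π π' : Path env} {L : Set (Name ⊕ Sig)} (hπ : π.len = ⊤)
    (hd : IsResDecomp env π π' L) (k : ℕ) : IsResDecomp env (π.drop k) (π'.drop k) L := by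
  obtain ⟨hlen, hstate, hact⟩ := hd
  refine ⟨by simp [Path.drop, hlen], fun n _ => hstate _ (by simp [hπ]),
    fun n _ => hact _ (by simp [hπ])⟩

theorem IsParDecomp.drop {π πP πQ : Path env} (hπ : π.len = ⊤) (hd : IsParDecomp env π πP πQ)
    (k : ℕ) : ∃ i j, IsParDecomp env (π.drop k) (πP.drop i) (πQ.drop j) := by
  obtain ⟨g, h, -, -, hstate, hstep, hlenP, hlenQ⟩ := hd
  have hsucc : ∀ n, g n ≤ g (n + 1) ∧ h n ≤ h (n + 1) := fun n => by
    rcases hstep n (by simp [hπ]) with ⟨_, _, _⟩ | ⟨_, _, _⟩ | ⟨_, _, _⟩ | ⟨_, _, _⟩ | ⟨_, _, _⟩ <;>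
      omega
  have hg : Monotone g := monotone_nat_of_le_succ fun n => (hsucc n).1
  have hh : Monotone h := monotone_nat_of_le_succ fun n => (hsucc n).2
  have hlen_drop : ∀ (π' : Path env) (f : ℕ → ℕ), Monotone f →
      π'.len = ⨆ n : {n : ℕ // (n : ℕ∞) ≤ π.len}, (f n : ℕ∞) →
      (π'.drop (f k)).len =
        ⨆ n : {n : ℕ // (n : ℕ∞) ≤ (π.drop k).len}, ((f (n + k) - f k : ℕ) : ℕ∞) := by
    intro π' f hf hlen
    rw [iSup_subtype_natCast_le_of_eq_top (by simp [Path.drop, hπ])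
        fun n => ((f (n + k) - f k : ℕ) : ℕ∞),
      ← hf.iSup_natCast_sub, ← iSup_subtype_natCast_le_of_eq_top hπ fun n => (f n : ℕ∞), ← hlen]
    rfl
  refine ⟨g k, h k, fun n => g (n + k) - g k, fun n => h (n + k) - h k, by simp, by simp,
    fun n _ => ?_, fun n _ => ?_, hlen_drop πP g hg hlenP, hlen_drop πQ h hh hlenQ⟩
  · simp only [Path.drop, Nat.sub_add_cancel (hg (Nat.le_add_left k n)),
      Nat.sub_add_cancel (hh (Nat.le_add_left k n))]
    exact hstate _ (by simp [hπ])
  · have hgk := hg (Nat.le_add_left k n)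
    have hhk := hh (Nat.le_add_left k n)
    simp only [Path.drop, Nat.sub_add_cancel hgk, Nat.sub_add_cancel hhk,
      show n + 1 + k = n + k + 1 by omega]
    rcases hstep (n + k) (by simp [hπ]) with
      ⟨_, _, hα⟩ | ⟨_, _, hα⟩ | ⟨_, _, hα⟩ | ⟨_, _, hα⟩ | ⟨_, _, hα⟩
    · exact Or.inl ⟨by omega, by omega, hα⟩
    · exact Or.inr <| Or.inl ⟨by omega, by omega, hα⟩
    · exact Or.inr <| Or.inr <| Or.inl ⟨by omega, by omega, hα⟩
    · exact Or.inr <| Or.inr <| Or.inr <| Or.inl ⟨by omega, by omega, hα⟩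
    · exact Or.inr <| Or.inr <| Or.inr <| Or.inr ⟨by omega, by omega, hα⟩

/-- A signal-free schedule of `πP | πQ`: after `n` steps the components have taken `left n` and
`right n` steps; each step advances one of them or, in a handshake, both. -/
structure Interleaving (πP πQ : Path env) where
  left : ℕ → ℕ
  right : ℕ → ℕ
  left_zero : left 0 = 0
  right_zero : right 0 = 0
  step : ∀ n, (left (n + 1) = left n + 1 ∧ right (n + 1) = right n) ∨
    (left (n + 1) = left n ∧ right (n + 1) = right n + 1) ∨
    (left (n + 1) = left n + 1 ∧ right (n + 1) = right n + 1 ∧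
      ∃ a, (πP.act (left n) = .name a ∧ πQ.act (right n) = .coname a) ∨
        (πP.act (left n) = .coname a ∧ πQ.act (right n) = .name a))
  len_left : πP.len = ⨆ n, (left n : ℕ∞)
  len_right : πQ.len = ⨆ n, (right n : ℕ∞)

namespace Interleaving

variable {πP πQ : Path env} (I : Interleaving πP πQ)

def act (n : ℕ) : Act Name Sig :=
  if I.right (n + 1) = I.right n then πP.act (I.left n)
  else if I.left (n + 1) = I.left n then πQ.act (I.right n)
  else .tau

theorem act_of_right_idle {n : ℕ} (h : I.right (n + 1) = I.right n) :
    I.act n = πP.act (I.left n) :=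
  if_pos h

theorem act_of_left_idle {n : ℕ} (hl : I.left (n + 1) = I.left n)
    (hr : I.right (n + 1) ≠ I.right n) : I.act n = πQ.act (I.right n) := by
  rw [act, if_neg hr, if_pos hl]

theorem act_of_both_move {n : ℕ} (hl : I.left (n + 1) ≠ I.left n)
    (hr : I.right (n + 1) ≠ I.right n) : I.act n = .tau := by
  rw [act, if_neg hr, if_neg hl]

theorem left_lt_len {n : ℕ} (h : I.left (n + 1) = I.left n + 1) : (I.left n : ℕ∞) < πP.len := by
  rw [I.len_left]
  exact (Nat.cast_lt.mpr (by omega)).trans_le (le_iSup (fun m => (I.left m : ℕ∞)) (n + 1))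

theorem right_lt_len {n : ℕ} (h : I.right (n + 1) = I.right n + 1) :
    (I.right n : ℕ∞) < πQ.len := by
  rw [I.len_right]
  exact (Nat.cast_lt.mpr (by omega)).trans_le (le_iSup (fun m => (I.right m : ℕ∞)) (n + 1))

theorem trans (n : ℕ) :
    Trans env (.par (πP.state (I.left n)) (πQ.state (I.right n))) (I.act n)
      (.par (πP.state (I.left (n + 1))) (πQ.state (I.right (n + 1)))) := by
  rcases I.step n with ⟨hl, hr⟩ | ⟨hl, hr⟩ | ⟨hl, hr, a, ⟨hP, hQ⟩ | ⟨hP, hQ⟩⟩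
  · rw [I.act_of_right_idle hr, hl, hr]
    exact .parL (πP.valid _ (I.left_lt_len hl))
  · rw [I.act_of_left_idle hl (by omega), hl, hr]
    exact .parR (πQ.valid _ (I.right_lt_len hr))
  · rw [I.act_of_both_move (by omega) (by omega), hl, hr]
    exact .sync1 (hP ▸ πP.valid _ (I.left_lt_len hl)) (hQ ▸ πQ.valid _ (I.right_lt_len hr))
  · rw [I.act_of_both_move (by omega) (by omega), hl, hr]
    exact .sync2 (hP ▸ πP.valid _ (I.left_lt_len hl)) (hQ ▸ πQ.valid _ (I.right_lt_len hr))

def path : Path env :=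
  .ofSteps env (fun n => .par (πP.state (I.left n)) (πQ.state (I.right n))) I.act I.trans

theorem isParDecomp : IsParDecomp env I.path πP πQ := by
  refine ⟨I.left, I.right, I.left_zero, I.right_zero, fun _ _ => rfl, fun n _ => ?_, ?_, ?_⟩
  · rcases I.step n with ⟨hl, hr⟩ | ⟨hl, hr⟩ | ⟨hl, hr, hsync⟩
    · exact Or.inl ⟨hl, hr, (I.act_of_right_idle hr).symm⟩
    · exact Or.inr <| Or.inl ⟨hl, hr, (I.act_of_left_idle hl (by omega)).symm⟩
    · exact Or.inr <| Or.inr <| Or.inl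
        ⟨hl, hr, I.act_of_both_move (by omega) (by omega), hsync⟩
  · exact I.len_left.trans (iSup_subtype_natCast_le_of_eq_top (l := I.path.len) rfl _).symm
  · exact I.len_right.trans (iSup_subtype_natCast_le_of_eq_top (l := I.path.len) rfl _).symm

end Interleaving

def Proc.IsSequential : Proc Name Sig Ident → Prop
  | .par .. | .res .. | .rel .. => False
  | _ => True

section Splitting

variable {ι : Type*} (p : ι → Path env) (Y : ι → Set (Act Name Sig))

variable (env) in
/-- How the path `p i`, proposed to be `Y i`-just, is built from other paths of the family. -/
inductive Splits : ι → Prop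
  | seq {i} : (∀ k, ((p i).state k).IsSequential) → Splits i
  | par {i j j'} : (p i).len = ⊤ → IsParDecomp env (p i) (p j) (p j') → Y j ∪ Y j' ⊆ Y i →
      (∀ a, Act.name a ∈ Y j → Act.coname a ∉ Y j') →
      (∀ a, Act.coname a ∈ Y j → Act.name a ∉ Y j') → Splits i
  | res {i j L} : (p i).len = ⊤ → IsResDecomp env (p i) (p j) L → Y j = Y i ∪ actsOf L → Splits i

variable {p Y}

theorem Splits.exists_isParDecomp_drop (hp : ∀ i, Splits env p Y i) {i : ι} {k : ℕ}
    {P Q : Proc Name Sig Ident} (h : ((p i).drop k).state 0 = .par P Q) :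
    ∃ j j' a b, IsParDecomp env ((p i).drop k) ((p j).drop a) ((p j').drop b) ∧
      Y j ∪ Y j' ⊆ Y i ∧ (∀ a, Act.name a ∈ Y j → Act.coname a ∉ Y j') ∧
      (∀ a, Act.coname a ∈ Y j → Act.name a ∉ Y j') := by
  simp only [Path.drop, zero_add] at h
  cases hp i with
  | seq hseq => exact (h ▸ hseq k : (Proc.par P Q).IsSequential).elim
  | par hlen hd hY hname hconame =>
    obtain ⟨a, b, hd'⟩ := hd.drop hlen k
    exact ⟨_, _, a, b, hd', hY, hname, hconame⟩
  | res hlen hd _ => cases h.symm.trans (hd.2.1 k (by simp [hlen]))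

theorem Splits.exists_isResDecomp_drop (hp : ∀ i, Splits env p Y i) {i : ι} {k : ℕ}
    {P : Proc Name Sig Ident} {L : Set (Name ⊕ Sig)} (h : ((p i).drop k).state 0 = .res P L) :
    ∃ j, IsResDecomp env ((p i).drop k) ((p j).drop k) L ∧ Y j = Y i ∪ actsOf L := by
  simp only [Path.drop, zero_add] at h
  cases hp i with
  | seq hseq => exact (h ▸ hseq k : (Proc.res P L).IsSequential).elim
  | par hlen hd =>
    obtain ⟨g, g', -, -, hstate, -⟩ := hd
    cases h.symm.trans (hstate k (by simp [hlen]))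
  | res hlen hd hY =>
    cases h.symm.trans (hd.2.1 k (by simp [hlen]))
    exact ⟨_, hd.drop hlen k, hY⟩

theorem Splits.drop_state_ne_rel (hp : ∀ i, Splits env p Y i) (i : ι) (k : ℕ)
    (P : Proc Name Sig Ident) (f : Name → Name) (g : Sig → Sig) :
    ((p i).drop k).state 0 ≠ .rel P f g := by
  intro h
  simp only [Path.drop, zero_add] at h
  cases hp i with
  | seq hseq => exact (h ▸ hseq k : (Proc.rel P f g).IsSequential)
  | par hlen hd =>
    obtain ⟨g, g', -, -, hstate, -⟩ := hd
    cases h.symm.trans (hstate k (by simp [hlen]))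
  | res hlen hd => cases h.symm.trans (hd.2.1 k (by simp [hlen]))

theorem Splits.signalling_drop [IsEmpty Sig] (hp : ∀ i, Splits env p Y i) (i : ι) (k : ℕ)
    (X : Set Sig) : Signalling env ((p i).drop k) X := by
  refine ⟨fun π _ => ∃ i k, π = (p i).drop k, ?_, i, k, rfl⟩
  rintro _ X ⟨i, k, rfl⟩
  refine ⟨fun _ _ s => isEmptyElim s, fun P Q h => ?_, fun P L h => ?_,
    fun P f g h => absurd h (Splits.drop_state_ne_rel hp i k P f g),
    fun m => ⟨i, k + m, Path.drop_drop _ _ _⟩⟩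
  · obtain ⟨j, j', a, b, hd, -⟩ := Splits.exists_isParDecomp_drop hp h
    exact ⟨_, _, ∅, ∅, hd, ⟨j, a, rfl⟩, ⟨j', b, rfl⟩, by simp⟩
  · obtain ⟨j, hd, -⟩ := Splits.exists_isResDecomp_drop hp h
    exact ⟨_, hd, j, k, rfl⟩

/-- `Path.drop` past the end of a finite path keeps reading `state`, so `hend` asks for the
blocking condition at every position from the length on. -/
theorem Splits.just_drop [IsEmpty Sig] (hp : ∀ i, Splits env p Y i)
    (hend : ∀ i (k : ℕ), (p i).len ≤ k → ∀ α P', Trans env ((p i).state k) α P' → α ∈ Y i)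
    (i : ι) (k : ℕ) : Just env ((p i).drop k) (Y i) := by
  refine ⟨fun π Z => ∃ i k, π = (p i).drop k ∧ Z = Y i, ?_, i, k, rfl, rfl⟩
  rintro _ _ ⟨i, k, rfl, rfl⟩
  refine ⟨fun m hm α P' htr => hend i (m + k) (Path.len_le_of_drop_len_eq hm) α P' htr,
    fun P Q h => ?_, fun P L h => ?_,
    fun P f g h => absurd h (Splits.drop_state_ne_rel hp i k P f g),
    fun m => ⟨i, k + m, Path.drop_drop _ _ _, rfl⟩⟩
  · obtain ⟨j, j', a, b, hd, hY, hname, hconame⟩ := Splits.exists_isParDecomp_drop hp h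
    exact ⟨_, _, _, _, ∅, ∅, hd, ⟨j, a, rfl, rfl⟩, ⟨j', b, rfl, rfl⟩,
      Splits.signalling_drop hp j a ∅, Splits.signalling_drop hp j' b ∅, hY, hname, hconame,
      fun s => isEmptyElim s, fun s => isEmptyElim s⟩
  · obtain ⟨j, hd, hY⟩ := Splits.exists_isResDecomp_drop hp h
    exact ⟨_, hd, j, k, rfl, hY.symm⟩

end Splitting

end

namespace PetersonCCS

def stuckA : PP := .pre (.coname (.assRA true)) (.pre (.coname (.assT false))
  (Proc.cplus (.pre (.name (.notRB false)) KA) (.pre (.name (.notT true)) KA)))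

theorem eq_of_trans_stuckA {α : Act PN Empty} {P : PP} (h : Trans env stuckA α P) :
    α = .coname (.assRA true) := by
  cases h
  rfl

def pathA : Path env where
  len := 1
  state n := if n = 0 then .ident .A else stuckA
  act _ := .name .noncritA
  valid n hn := by
    obtain rfl : n = 0 := by exact_mod_cast Order.lt_one_iff.mp hn
    exact .ident .pre

def choiceB : PP := Proc.cplus (.pre (.name (.notRA false)) KB) (.pre (.name (.notT false)) KB)

def stateB : ℕ → PP
  | 0 => .ident .B
  | 1 => .pre (.coname (.assRB true)) (.pre (.coname (.assT true)) choiceB)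
  | 2 => .pre (.coname (.assT true)) choiceB
  | 3 => choiceB
  | 4 => KB
  | _ => .pre (.coname (.assRB false)) (.ident .B)

def actB : ℕ → Act PN Empty
  | 0 => .name .noncritB
  | 1 => .coname (.assRB true)
  | 2 => .coname (.assT true)
  | 3 => .name (.notRA false)
  | 4 => .name .critB
  | _ => .coname (.assRB false)

theorem trans_stateB (j : ℕ) :
    Trans env (stateB (j % 6)) (actB (j % 6)) (stateB ((j + 1) % 6)) := by
  rw [Nat.add_mod]
  have hj : j % 6 < 6 := Nat.mod_lt _ (by norm_num)
  interval_cases j % 6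
  exacts [.ident .pre, .pre, .pre, .choice (j := true) .pre, .pre, .pre]

theorem stateB_isSequential (j : ℕ) : (stateB j).IsSequential := by
  unfold stateB
  split <;> trivial

def pathB : Path env := .ofSteps env (fun j => stateB (j % 6)) (fun j => actB (j % 6)) trans_stateB

def pathRA : Path env :=
  .ofSteps env (fun _ => .ident (.RA false)) (fun _ => .coname (.notRA false))
    fun _ => .ident (.choice (j := false) (.choice (j := false) .pre))

theorem trans_RB (j : ℕ) :
    Trans env (.ident (.RB (decide (j % 2 = 1)))) (.name (.assRB (decide (j % 2 = 0))))
      (.ident (.RB (decide ((j + 1) % 2 = 1)))) := by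
  rcases Nat.mod_two_eq_zero_or_one j with h | h
  · rw [show (j + 1) % 2 = 1 by omega]
    simp only [h]
    exact .ident (.choice (j := true) .pre)
  · rw [show (j + 1) % 2 = 0 by omega]
    simp only [h]
    exact .ident (.choice (j := false) (.choice (j := true) .pre))

def pathRB : Path env :=
  .ofSteps env (fun j => .ident (.RB (decide (j % 2 = 1))))
    (fun j => .name (.assRB (decide (j % 2 = 0)))) trans_RB

def pathT : Path env :=
  .ofSteps env (fun _ => .ident (.T true)) (fun _ => .name (.assT true))
    fun _ => .ident (.choice (j := true) .pre)

-- Step 0 is A's `noncritA`, step `n ≥ 1` is B's instruction `(n - 1) % 6`. So, mod 6, readyA is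
-- read at steps `≡ 4`, readyB written at steps `≡ 2` and `≡ 0` (`n > 0`) and turn at steps `≡ 3`:
-- the `right` counters below count these handshakes.
def interAB : Interleaving pathA pathB where
  left n := min n 1
  right n := n - 1
  left_zero := rfl
  right_zero := rfl
  step n := by
    rcases n with _ | n
    · exact Or.inl ⟨rfl, rfl⟩
    · exact Or.inr <| Or.inl ⟨by omega, by omega⟩
  len_left := le_antisymm (le_iSup_of_le 1 le_rfl)
    (iSup_le fun n => show _ ≤ ((1 : ℕ) : ℕ∞) from Nat.cast_le.mpr (min_le_right n 1))
  len_right := (ENat.iSup_natCast_eq_top_of_forall_lt fun m => ⟨m + 2, by omega⟩).symm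

theorem interAB_act_zero : interAB.act 0 = .name .noncritA :=
  interAB.act_of_right_idle rfl

theorem interAB_act {n : ℕ} (hn : n ≠ 0) : interAB.act n = actB ((n - 1) % 6) :=
  interAB.act_of_left_idle (show min (n + 1) 1 = min n 1 by omega)
    (show n + 1 - 1 ≠ n - 1 by omega)

def interABRA : Interleaving interAB.path pathRA where
  left n := n
  right n := (n + 1) / 6
  left_zero := rfl
  right_zero := rfl
  step n := by
    by_cases h : n % 6 = 4
    · refine Or.inr <| Or.inr ⟨rfl, by omega, .notRA false, Or.inl ⟨?_, rfl⟩⟩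
      change interAB.act n = _
      rw [interAB_act (by omega), show (n - 1) % 6 = 3 by omega]
      rfl
    · exact Or.inl ⟨rfl, by omega⟩
  len_left := ENat.iSup_natCast.symm
  len_right := (ENat.iSup_natCast_eq_top_of_forall_lt fun m => ⟨6 * m + 6, by omega⟩).symm

theorem interABRA_act_of_sync {n : ℕ} (h : n % 6 = 4) : interABRA.act n = .tau :=
  interABRA.act_of_both_move (show n + 1 ≠ n by omega) (show (n + 2) / 6 ≠ (n + 1) / 6 by omega)

theorem interABRA_act {n : ℕ} (h : n % 6 ≠ 4) : interABRA.act n = interAB.act n :=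
  interABRA.act_of_right_idle (show (n + 2) / 6 = (n + 1) / 6 by omega)

def interABRARB : Interleaving interABRA.path pathRB where
  left n := n
  right n := (n + 3) / 6 + (n - 1) / 6
  left_zero := rfl
  right_zero := rfl
  step n := by
    by_cases h2 : n % 6 = 2
    · refine Or.inr <| Or.inr ⟨rfl, by omega, .assRB true, Or.inr ⟨?_, ?_⟩⟩
      · change interABRA.act n = _
        rw [interABRA_act (by omega), interAB_act (by omega), show (n - 1) % 6 = 1 by omega]
        rfl
      · change Act.name (PN.assRB (decide (_ % 2 = 0))) = _
        rw [decide_eq_true (by omega)]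
    by_cases h0 : n % 6 = 0 ∧ n ≠ 0
    · refine Or.inr <| Or.inr ⟨rfl, by omega, .assRB false, Or.inr ⟨?_, ?_⟩⟩
      · change interABRA.act n = _
        rw [interABRA_act (by omega), interAB_act (by omega), show (n - 1) % 6 = 5 by omega]
        rfl
      · change Act.name (PN.assRB (decide (_ % 2 = 0))) = _
        rw [decide_eq_false (by omega)]
    · exact Or.inl ⟨rfl, by omega⟩
  len_left := ENat.iSup_natCast.symm
  len_right := (ENat.iSup_natCast_eq_top_of_forall_lt fun m => ⟨6 * m + 6, by omega⟩).symm

theorem interABRARB_act_of_sync {n : ℕ} (h : n % 6 = 2 ∨ n % 6 = 0 ∧ n ≠ 0) :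
    interABRARB.act n = .tau :=
  interABRARB.act_of_both_move (show n + 1 ≠ n by omega)
    (show (n + 1 + 3) / 6 + (n + 1 - 1) / 6 ≠ (n + 3) / 6 + (n - 1) / 6 by omega)

theorem interABRARB_act {n : ℕ} (h : ¬(n % 6 = 2 ∨ n % 6 = 0 ∧ n ≠ 0)) :
    interABRARB.act n = interABRA.act n :=
  interABRARB.act_of_right_idle
    (show (n + 1 + 3) / 6 + (n + 1 - 1) / 6 = (n + 3) / 6 + (n - 1) / 6 by omega)

def interAll : Interleaving interABRARB.path pathT where
  left n := n
  right n := (n + 2) / 6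
  left_zero := rfl
  right_zero := rfl
  step n := by
    by_cases h : n % 6 = 3
    · refine Or.inr <| Or.inr ⟨rfl, by omega, .assT true, Or.inr ⟨?_, rfl⟩⟩
      change interABRARB.act n = _
      rw [interABRARB_act (by omega), interABRA_act (by omega), interAB_act (by omega),
        show (n - 1) % 6 = 2 by omega]
      rfl
    · exact Or.inl ⟨rfl, by omega⟩
  len_left := ENat.iSup_natCast.symm
  len_right := (ENat.iSup_natCast_eq_top_of_forall_lt fun m => ⟨6 * m + 6, by omega⟩).symm

theorem interAll_act (n : ℕ) :
    interAll.act n = .tau ∨ interAll.act n = .name .noncritA ∨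
      interAll.act n = .name .noncritB ∨ interAll.act n = .name .critB := by
  by_cases h3 : n % 6 = 3
  · exact Or.inl <| interAll.act_of_both_move (show n + 1 ≠ n by omega)
      (show (n + 1 + 2) / 6 ≠ (n + 2) / 6 by omega)
  rw [interAll.act_of_right_idle (show (n + 1 + 2) / 6 = (n + 2) / 6 by omega)]
  change interABRARB.act n = _ ∨ interABRARB.act n = _ ∨ interABRARB.act n = _ ∨
    interABRARB.act n = _
  by_cases hRB : n % 6 = 2 ∨ n % 6 = 0 ∧ n ≠ 0
  · exact Or.inl (interABRARB_act_of_sync hRB)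
  rw [interABRARB_act hRB]
  by_cases hRA : n % 6 = 4
  · exact Or.inl (interABRA_act_of_sync hRA)
  rw [interABRA_act hRA]
  rcases eq_or_ne n 0 with rfl | hn
  · exact Or.inr <| Or.inl interAB_act_zero
  rw [interAB_act hn]
  rcases (show (n - 1) % 6 = 0 ∨ (n - 1) % 6 = 4 by omega) with h | h <;> simp [h, actB]

theorem interAll_act_zero : interAll.act 0 = .name .noncritA := by
  rw [interAll.act_of_right_idle rfl]
  change interABRARB.act 0 = _
  rw [interABRARB_act (by decide), interABRA_act (by decide), interAB_act_zero]

theorem allowed_interAll_act (n : ℕ) : (interAll.act n).allowed L := by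
  rcases interAll_act n with h | h | h | h <;> simp [h, Act.allowed, L]

def pathSys : Path env := interAll.path.restrict L fun n _ => allowed_interAll_act n

inductive Component
  | sys | all | abRaRb | abRa | ab | a | b | ra | rb | t

def Component.path : Component → Path env
  | sys => pathSys
  | all => interAll.path
  | abRaRb => interABRARB.path
  | abRa => interABRA.path
  | ab => interAB.path
  | a => pathA
  | b => pathB
  | ra => pathRA
  | rb => pathRB
  | t => pathT

/-- As in the paper: the path is `∅`-just, its decomposition along `A` is
`{a̅ss(readyA,true)}`-just and those along `B` and the variables are `∅`-just. -/
def Component.blocking : Component → Set (Act PN Empty)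
  | sys | b | ra | rb | t => ∅
  | all => actsOf L
  | abRaRb | abRa | ab | a => {.coname (.assRA true)}

theorem coname_assRA_mem_actsOf_L :
    Act.coname (PN.assRA true) ∈ (actsOf L : Set (Act PN Empty)) :=
  Or.inl ⟨.assRA true, by simp [L], Or.inr rfl⟩

theorem component_splits (c : Component) : Splits env Component.path Component.blocking c := by
  cases c with
  | sys =>
    exact .res (j := .all) rfl (Path.isResDecomp_restrict _ _ fun n _ => allowed_interAll_act n)
      (Set.empty_union _).symm
  | all =>
    refine .par (j := .abRaRb) (j' := .t) rfl interAll.isParDecomp ?_ ?_ ?_ <;>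
      simp [Component.blocking, coname_assRA_mem_actsOf_L]
  | abRaRb =>
    refine .par (j := .abRa) (j' := .rb) rfl interABRARB.isParDecomp ?_ ?_ ?_ <;>
      simp [Component.blocking]
  | abRa =>
    refine .par (j := .ab) (j' := .ra) rfl interABRA.isParDecomp ?_ ?_ ?_ <;>
      simp [Component.blocking]
  | ab =>
    refine .par (j := .a) (j' := .b) rfl interAB.isParDecomp ?_ ?_ ?_ <;>
      simp [Component.blocking]
  | a =>
    refine .seq fun k => ?_
    change (if k = 0 then _ else _ : PP).IsSequential
    split <;> trivial
  | b => exact .seq fun k => stateB_isSequential _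
  | ra | rb | t => exact .seq fun _ => trivial

theorem component_blocking_at_end (c : Component) (k : ℕ) (hk : c.path.len ≤ k)
    (α : Act PN Empty) (P : PP) (h : Trans env (c.path.state k) α P) : α ∈ c.blocking := by
  cases c
  case a =>
    have hk1 : k ≠ 0 := by rintro rfl; exact absurd hk (by simp [Component.path, pathA])
    simp only [Component.path, pathA, if_neg hk1] at h
    exact eq_of_trans_stuckA h
  all_goals exact absurd hk (not_le.mpr (ENat.natCast_lt_top k))

/-- in the CCS rendering there is an ∅-just (hence just) infinite
path on which noncritA occurs but critA never occurs (A halts just before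
writing readyA while B cycles forever reading readyA = false), so the CCS
rendering fails liveness under justness. -/
theorem ccs_peterson_liveness_fails :
    ∃ π : Path env, π.state 0 = Sys ∧ π.len = ⊤ ∧ Just env π ∅ ∧ IsJust env π ∧
      (∃ n : ℕ, π.act n = .name .noncritA) ∧
      (∀ n : ℕ, π.act n ≠ .name .critA) := by
  have hjust : Just env pathSys ∅ := by
    have h := Splits.just_drop component_splits component_blocking_at_end .sys 0
    rwa [Path.drop_zero] at h
  refine ⟨pathSys, rfl, rfl, hjust, ⟨∅, Set.notMem_empty _, hjust⟩, ⟨0, interAll_act_zero⟩,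
    fun n => ?_⟩
  rcases interAll_act n with h | h | h | h <;> exact fun h' => by cases h.symm.trans h'

end PetersonCCS
end CCSS
end

section
/- In Peterson's filter-lock algorithm for N = 3 processes under a sequentially consistent memory with blocking writes (a write to a variable can be delayed indefinitely while other processes write to it), there is an execution, compatible with progress and justness, in which Process A is stuck forever at the instruction writing last[1], while Processes B and C alternately enter the critical section infinitely often; hence the filter lock fails liveness without a fairness assumption on writes. -/
namespace FilterLockSC

/-- Program counters of a process in Peterson's filter lock for N = 3 under a
sequentially consistent memory with atomic but blocking writes: a process at
`wlast j` is waiting to perform the write last[j] := i, which may be delayed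
indefinitely while other processes write to the same variable. -/
inductive PC
  | noncrit
  | setRoom (j : ℕ)  -- about to execute room[i] := j
  | wlast (j : ℕ)    -- trying to write last[j] := i
  | await (j : ℕ)    -- at the await of round j
  | crit
  | reset            -- about to execute room[i] := 0

structure St where
  pc : Fin 3 → PC
  room : Fin 3 → ℕ
  last : ℕ → Fin 3

/-- Small-step semantics with atomic writes to last[j]. -/
inductive Step : St → St → Prop
  | leave (s : St) (i : Fin 3) : s.pc i = .noncrit →
      Step s { s with pc := Function.update s.pc i (.setRoom 1) }
  | setRoom (s : St) (i : Fin 3) (j : ℕ) : s.pc i = .setRoom j →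
      Step s { pc := Function.update s.pc i (.wlast j),
               room := Function.update s.room i j, last := s.last }
  | writeLast (s : St) (i : Fin 3) (j : ℕ) : s.pc i = .wlast j →
      Step s { pc := Function.update s.pc i (.await j),
               room := s.room, last := Function.update s.last j i }
  | passAwait (s : St) (i : Fin 3) (j : ℕ) : s.pc i = .await j →
      (s.last j ≠ i ∨ ∀ k : Fin 3, k ≠ i → s.room k < j) →
      Step s { s with
        pc := Function.update s.pc i (if j < 2 then .setRoom (j + 1) else .crit) }
  | exitCrit (s : St) (i : Fin 3) : s.pc i = .crit →
      Step s { s with pc := Function.update s.pc i .reset }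
  | resetRoom (s : St) (i : Fin 3) : s.pc i = .reset →
      Step s { pc := Function.update s.pc i .noncrit,
               room := Function.update s.room i 0, last := s.last }

/-- Initial state: Process A = 0 is in room 1, about to write last[1]; the
other processes are noncritical. -/
def init : St :=
  { pc := fun i => if i = 0 then .wlast 1 else .noncrit,
    room := fun i => if i = 0 then 1 else 0,
    last := fun _ => 0 }

section Lasso

def lassoIdx (p q n : ℕ) : ℕ := if n < p then n else p + (n - p) % q

variable {p q : ℕ}

lemma lassoIdx_lt (hq : 0 < q) (n : ℕ) : lassoIdx p q n < p + q := by
  unfold lassoIdx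
  split_ifs
  · omega
  · have := Nat.mod_lt (n - p) hq
    omega

lemma lassoIdx_succ (hq : 0 < q) (n : ℕ) :
    lassoIdx p q (n + 1) = if lassoIdx p q n + 1 = p + q then p else lassoIdx p q n + 1 := by
  unfold lassoIdx
  by_cases hn : n < p
  · rw [if_pos hn, if_neg (show n + 1 ≠ p + q by omega)]
    by_cases hn' : n + 1 < p
    · rw [if_pos hn']
    · rw [if_neg hn', show n + 1 - p = 0 by omega, Nat.zero_mod]
      omega
  · have hdiv := Nat.div_add_mod (n - p) q
    have hlt := Nat.mod_lt (n - p) hq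
    set d := (n - p) / q
    set r := (n - p) % q
    have hsucc : n + 1 - p = q * d + (r + 1) := by omega
    rw [if_neg hn, if_neg (by omega), hsucc, Nat.mul_add_mod]
    split_ifs with hr
    · rw [show r + 1 = q by omega, Nat.mod_self, Nat.add_zero]
    · rw [Nat.mod_eq_of_lt (by omega), Nat.add_assoc]

lemma lassoIdx_add_mul {k : ℕ} (hpk : p ≤ k) (hkq : k < p + q) (m : ℕ) :
    lassoIdx p q (k + q * m) = k := by
  unfold lassoIdx
  rw [if_neg (not_lt.2 (hpk.trans (Nat.le_add_right _ _))), show k + q * m - p = k - p + q * m by omega,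
    Nat.add_mul_mod_self_left, Nat.mod_eq_of_lt (by omega)]
  omega

theorem rel_lassoIdx_succ {α : Type*} {r : α → α → Prop} {f : ℕ → α} (hq : 0 < q)
    (hstep : ∀ k < p + q, r (f k) (f (k + 1))) (hback : f (p + q) = f p) (n : ℕ) :
    r (f (lassoIdx p q n)) (f (lassoIdx p q (n + 1))) := by
  have hlt := lassoIdx_lt (p := p) hq n
  rw [lassoIdx_succ hq]
  split_ifs with hend
  · rw [← hback, ← hend]
    exact hstep _ hlt
  · exact hstep _ hlt

end Lasso

/-- The effect of the next instruction of process `i`; at an `await` the guard is not checked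
here but by `enabled`. -/
def act (i : Fin 3) (s : St) : St :=
  match s.pc i with
  | .noncrit => { s with pc := Function.update s.pc i (.setRoom 1) }
  | .setRoom j => { pc := Function.update s.pc i (.wlast j),
                    room := Function.update s.room i j, last := s.last }
  | .wlast j => { pc := Function.update s.pc i (.await j),
                  room := s.room, last := Function.update s.last j i }
  | .await j => { s with
      pc := Function.update s.pc i (if j < 2 then .setRoom (j + 1) else .crit) }
  | .crit => { s with pc := Function.update s.pc i .reset }
  | .reset => { pc := Function.update s.pc i .noncrit,
                room := Function.update s.room i 0, last := s.last }

def enabled (i : Fin 3) (s : St) : Bool :=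
  match s.pc i with
  | .await j => decide (s.last j ≠ i ∨ ∀ k : Fin 3, k ≠ i → s.room k < j)
  | _ => true

lemma step_act {i : Fin 3} {s : St} (h : enabled i s) : Step s (act i s) := by
  cases hpc : s.pc i with
  | noncrit => simpa only [act, hpc] using Step.leave s i hpc
  | setRoom j => simpa only [act, hpc] using Step.setRoom s i j hpc
  | wlast j => simpa only [act, hpc] using Step.writeLast s i j hpc
  | await j =>
    simp only [enabled, hpc, decide_eq_true_eq] at h
    simpa only [act, hpc] using Step.passAwait s i j hpc h
  | crit => simpa only [act, hpc] using Step.exitCrit s i hpc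
  | reset => simpa only [act, hpc] using Step.resetRoom s i hpc

lemma act_pc_of_ne {i j : Fin 3} (h : j ≠ i) (s : St) : (act i s).pc j = s.pc j := by
  unfold act
  split <;> exact Function.update_of_ne h _ _

def run (l : List (Fin 3)) (s : St) : St := l.foldl (fun s i => act i s) s

lemma run_pc_of_not_mem {i : Fin 3} {l : List (Fin 3)} (h : i ∉ l) (s : St) :
    (run l s).pc i = s.pc i := by
  induction l generalizing s with
  | nil => rfl
  | cons j l ih =>
    rw [List.mem_cons, not_or] at h
    simp only [run, List.foldl_cons] at ih ⊢
    rw [ih h.2, act_pc_of_ne h.1]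

/-- The processes to move, in order. Stem (9 moves): B and C enter room 1, and B, released by
C's write to last[1], moves on to room 2. Cycle (18 moves): B passes the critical section and
returns to room 1, overwriting last[1] and so releasing C, which does the same and releases B.
The cycle ends in the state it started from, and A is never scheduled, so it waits forever at
its write to last[1] while B and C keep that variable busy. -/
def schedule : List (Fin 3) :=
  [1, 1, 1, 2, 2, 2, 1, 1, 1,
   1, 1, 1, 1, 1, 1, 2, 2, 2, 2, 2, 2, 2, 2, 2, 1, 1, 1]

def trace (k : ℕ) : St := run (schedule.take k) init

lemma trace_succ {k : ℕ} (hk : k < schedule.length) :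
    trace (k + 1) = act schedule[k] (trace k) := by
  simp only [trace, run, List.take_add_one, List.getElem?_eq_getElem hk, Option.toList_some,
    List.foldl_append, List.foldl_cons, List.foldl_nil]

lemma schedule_enabled : ∀ k (hk : k < schedule.length), enabled schedule[k] (trace k) := by
  decide

lemma trace_step {k : ℕ} (hk : k < 9 + 18) : Step (trace k) (trace (k + 1)) := by
  rw [trace_succ hk]
  exact step_act (schedule_enabled k hk)

lemma trace_cycle : trace (9 + 18) = trace 9 := by
  have hpc : (trace 27).pc = (trace 9).pc := by
    funext i; fin_cases i <;> rfl
  have hroom : (trace 27).room = (trace 9).room := by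
    funext i; fin_cases i <;> rfl
  have hlast : (trace 27).last = (trace 9).last := by
    funext j; rcases j with _ | _ | _ | j <;> rfl
  calc trace 27 = ⟨(trace 27).pc, (trace 27).room, (trace 27).last⟩ := rfl
    _ = trace 9 := by rw [hpc, hroom, hlast]

lemma trace_pc_zero (k : ℕ) : (trace k).pc 0 = .wlast 1 :=
  run_pc_of_not_mem (fun h => absurd (List.mem_of_mem_take h) (by decide)) init

def path (n : ℕ) : St := trace (lassoIdx 9 18 n)

lemma path_add_mul {k : ℕ} (hk : 9 ≤ k) (hk' : k < 9 + 18) (m : ℕ) :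
    path (k + 18 * m) = trace k := by
  rw [path, lassoIdx_add_mul hk hk']

/-- under sequential consistency with blocking writes, the filter
lock for N = 3 fails liveness without fairness: there is an infinite execution,
compatible with progress (the run is infinite) and justness (processes B = 1
and C = 2 act and enter the critical section infinitely often, while A's
pending write of last[1] is forever pre-empted because last[1] is infinitely
often being written by the other processes), on which A = 0 is stuck forever
at the write to last[1]. -/
theorem filter_lock_liveness_fails :
    ∃ path : ℕ → St, path 0 = init ∧
      (∀ n, Step (path n) (path (n + 1))) ∧
      (∀ n, (path n).pc 0 = .wlast 1) ∧
      (∀ m, ∃ n, m ≤ n ∧ (path n).pc 1 = .crit) ∧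
      (∀ m, ∃ n, m ≤ n ∧ (path n).pc 2 = .crit) ∧
      (∀ m, ∃ n, m ≤ n ∧ ∃ i : Fin 3, i ≠ 0 ∧
        (path n).pc i = .wlast 1 ∧ (path (n + 1)).pc i = .await 1) := by
  refine ⟨path, rfl, rel_lassoIdx_succ (by norm_num) (fun _ => trace_step) trace_cycle,
    fun n => trace_pc_zero _, fun m => ⟨10 + 18 * m, by omega, ?_⟩,
    fun m => ⟨19 + 18 * m, by omega, ?_⟩, fun m => ⟨14 + 18 * m, by omega, 1, by decide, ?_⟩⟩
  -- On the cycle, B is critical in state 10 and C in state 19, and B writes last[1] at move 14.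
  · rw [path_add_mul (by norm_num) (by norm_num)]
    rfl
  · rw [path_add_mul (by norm_num) (by norm_num)]
    rfl
  · rw [show 14 + 18 * m + 1 = 15 + 18 * m by omega, path_add_mul (by norm_num) (by norm_num),
      path_add_mul (by norm_num) (by norm_num)]
    exact ⟨rfl, rfl⟩

end FilterLockSC
end
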